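/- Let B ∈ ℝ^{d×d} and let m, n be integers with 0 ≤ m < n ≤ d. Then for any s ∈ [m,n], φ^s(B) ≥ (φ^m(B))^{(n−s)/(n−m)} · (φ^n(B))^{(s−m)/(n−m)}. In particular, taking m = 0, φ^s(B) ≥ (φ^n(B))^{s/n} for 0 ≤ s ≤ n. -/

import Mathlib

open scoped BigOperators

noncomputable def svalList {n : Type*} [Fintype n] [DecidableEq n] (A : Matrix n n ℝ) : List ℝ :=
  ((Multiset.map (fun i => Real.sqrt ((show (A.transpose * A).IsHermitian by
      simpa using Matrix.isHermitian_conjTranspose_mul_self A).eigenvalues i))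
      Finset.univ.val).sort (· ≤ ·)).reverse

/-- `sval A j` is the `(j+1)`-th largest singular value `α_{j+1}(A)` (0-indexed). -/
noncomputable def sval {n : Type*} [Fintype n] [DecidableEq n] (A : Matrix n n ℝ) (j : ℕ) : ℝ :=
  (svalList A).getD j 0

/-- The singular value function `φ^s` (with `φ^s(A) = |det A|^{s/d}` for `s > d`). -/
noncomputable def phi {d : ℕ} (s : ℝ) (A : Matrix (Fin d) (Fin d) ℝ) : ℝ :=
  if s ≤ d then
    (∏ i ∈ Finset.range ⌊s⌋₊, sval A i) *
      (if ⌊s⌋₊ < d then sval A ⌊s⌋₊ ^ (s - ⌊s⌋₊) else 1)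
  else |A.det| ^ (s / (d : ℝ))


/-!
On the integers, `log φ^k(B) = ∑_{i<k} log α_{i+1}(B)`, and between consecutive integers
`log φ^s` is linear with slope `log α_{⌊s⌋+1}`; as the singular values decrease, `s ↦ log φ^s`
is concave, which is the interpolation inequality. To allow vanishing singular values the
argument is run multiplicatively: with `p = ⌊s⌋`, split `φ^n = φ^m · Q · R` where `Q` and `R` are
the products of the singular values with indices in `[m, p)` and `[p, n)`, and compare both
with powers of `α_{p+1}`.
-/

open Finset

section AntitoneProducts

variable {f : ℕ → ℝ}

lemma pow_le_prod_Ico_of_antitone (hf : Antitone f) (hf0 : ∀ i, 0 ≤ f i) (m p : ℕ) :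
    f p ^ (p - m) ≤ ∏ i ∈ Ico m p, f i := by
  simpa using prod_le_prod (s := Ico m p) (fun _ _ => hf0 p) fun i hi => hf (mem_Ico.1 hi).2.le

lemma prod_Ico_le_pow_of_antitone (hf : Antitone f) (hf0 : ∀ i, 0 ≤ f i) (p n : ℕ) :
    ∏ i ∈ Ico p n, f i ≤ f p ^ (n - p) := by
  simpa using prod_le_prod (s := Ico p n) (fun i _ => hf0 i) fun i hi => hf (mem_Ico.1 hi).1

/-- Log-concavity of `s ↦ (∏_{i<⌊s⌋} f i) · f ⌊s⌋ ^ (s - ⌊s⌋)`, stated for an arbitrary split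
point `p ≤ s` in place of `⌊s⌋`. -/
theorem prod_range_rpow_mul_prod_range_rpow_le (hf : Antitone f) (hf0 : ∀ i, 0 ≤ f i)
    {m p n : ℕ} {s : ℝ} (hmp : m ≤ p) (hpn : p ≤ n) (hmn : m < n) (hms : (m : ℝ) ≤ s)
    (hsn : s ≤ n) (hps : (p : ℝ) ≤ s) :
    (∏ i ∈ range m, f i) ^ ((n - s) / (n - m)) * (∏ i ∈ range n, f i) ^ ((s - m) / (n - m)) ≤
      (∏ i ∈ range p, f i) * f p ^ (s - p) := by
  have hnm : (0 : ℝ) < n - m := sub_pos.2 (by exact_mod_cast hmn)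
  set a := (n - s) / (n - m) with ha_def
  set b := (s - m) / (n - m) with hb_def
  have ha : 0 ≤ a := div_nonneg (by linarith) hnm.le
  have hb : 0 ≤ b := div_nonneg (by linarith) hnm.le
  have hab : a + b = 1 := by rw [ha_def, hb_def, ← add_div]; field_simp; ring
  set P := ∏ i ∈ range m, f i
  set Q := ∏ i ∈ Ico m p, f i
  set R := ∏ i ∈ Ico p n, f i
  have hP : 0 ≤ P := prod_nonneg fun i _ => hf0 i
  have hQ : 0 ≤ Q := prod_nonneg fun i _ => hf0 i
  have hR : 0 ≤ R := prod_nonneg fun i _ => hf0 i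
  have hfp := hf0 p
  have hrange_p : ∏ i ∈ range p, f i = P * Q := (prod_range_mul_prod_Ico f hmp).symm
  have hrange_n : ∏ i ∈ range n, f i = P * Q * R := by
    rw [← hrange_p, prod_range_mul_prod_Ico f hpn]
  -- the two powers of `f p` bounding `Q` and `R` balance exactly
  have hexp : ((n - p : ℕ) : ℝ) * b = ((p - m : ℕ) : ℝ) * a + (s - p) := by
    rw [Nat.cast_sub hpn, Nat.cast_sub hmp, ha_def, hb_def]; field_simp; ring
  have hR_le : R ^ b ≤ Q ^ a * f p ^ (s - p) := calc
    R ^ b ≤ (f p ^ (n - p)) ^ b :=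
      Real.rpow_le_rpow hR (prod_Ico_le_pow_of_antitone hf hf0 p n) hb
    _ = (f p ^ (p - m)) ^ a * f p ^ (s - p) := by
      rw [← Real.rpow_natCast_mul hfp, hexp,
        Real.rpow_add_of_nonneg hfp (by positivity) (by linarith), Real.rpow_natCast_mul hfp]
    _ ≤ Q ^ a * f p ^ (s - p) := by
      gcongr
      exact pow_le_prod_Ico_of_antitone hf hf0 m p
  rw [hrange_n]
  calc P ^ a * (P * Q * R) ^ b = P ^ (a + b) * Q ^ b * R ^ b := by
        rw [Real.mul_rpow (by positivity) hR, Real.mul_rpow hP hQ,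
          Real.rpow_add' hP (by rw [hab]; exact one_ne_zero)]
        ring
    _ ≤ P * Q ^ b * (Q ^ a * f p ^ (s - p)) := by
        rw [hab, Real.rpow_one]
        gcongr
    _ = P * Q ^ (a + b) * f p ^ (s - p) := by
        rw [Real.rpow_add' hQ (by rw [hab]; exact one_ne_zero)]
        ring
    _ = (∏ i ∈ range p, f i) * f p ^ (s - p) := by rw [hab, Real.rpow_one, hrange_p]

end AntitoneProducts

section SingularValues

variable {ι : Type*} [Fintype ι] [DecidableEq ι] (A : Matrix ι ι ℝ)

lemma sval_nonneg (j : ℕ) : 0 ≤ sval A j := by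
  rcases lt_or_ge j (svalList A).length with hj | hj
  · rw [sval, List.getD_eq_getElem _ _ hj]
    obtain ⟨i, -, hi⟩ := Multiset.mem_map.1 <| (Multiset.mem_sort _).1 <|
      List.mem_reverse.1 (List.getElem_mem hj)
    exact hi ▸ Real.sqrt_nonneg _
  · rw [sval, List.getD_eq_default _ _ hj]

lemma sval_antitone : Antitone (sval A) := by
  intro j k hjk
  rcases lt_or_ge k (svalList A).length with hk | hk
  · have hsorted : (svalList A).Pairwise (· ≥ ·) :=
      List.pairwise_reverse.2 (Multiset.pairwise_sort _ _)
    rw [sval, sval, List.getD_eq_getElem _ _ hk, List.getD_eq_getElem _ _ (hjk.trans_lt hk)]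
    exact hsorted.rel_get_of_le (a := ⟨j, hjk.trans_lt hk⟩) (b := ⟨k, hk⟩) hjk
  · rw [sval, List.getD_eq_default _ _ hk]
    exact sval_nonneg A j

end SingularValues

section SingularValueFunction

variable {d : ℕ} (A : Matrix (Fin d) (Fin d) ℝ)

/-- Below `d` the two branches in the definition of `phi` agree: when `⌊s⌋₊ = d` the
exponent `s - ⌊s⌋₊` vanishes. -/
lemma phi_eq_prod_mul_rpow {s : ℝ} (hs0 : 0 ≤ s) (hsd : s ≤ d) :
    phi s A = (∏ i ∈ range ⌊s⌋₊, sval A i) * sval A ⌊s⌋₊ ^ (s - ⌊s⌋₊) := by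
  rw [phi, if_pos hsd]
  split_ifs with hlt
  · rfl
  · have hfloor : (⌊s⌋₊ : ℝ) = s :=
      le_antisymm (Nat.floor_le hs0) (hsd.trans (by exact_mod_cast not_lt.1 hlt))
    rw [hfloor, sub_self, Real.rpow_zero]

lemma phi_natCast {k : ℕ} (hk : k ≤ d) : phi (k : ℝ) A = ∏ i ∈ range k, sval A i := by
  rw [phi_eq_prod_mul_rpow A k.cast_nonneg (by exact_mod_cast hk), Nat.floor_natCast, sub_self,
    Real.rpow_zero, mul_one]

lemma phi_interpolation_of_le {m n : ℕ} (hmn : m < n) (hnd : n ≤ d) {s : ℝ} (hms : (m : ℝ) ≤ s)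
    (hsn : s ≤ n) :
    phi (m : ℝ) A ^ ((n - s) / (n - m)) * phi (n : ℝ) A ^ ((s - m) / (n - m)) ≤ phi s A := by
  have hs0 : 0 ≤ s := m.cast_nonneg.trans hms
  rw [phi_natCast A (hmn.le.trans hnd), phi_natCast A hnd,
    phi_eq_prod_mul_rpow A hs0 (hsn.trans (by exact_mod_cast hnd))]
  exact prod_range_rpow_mul_prod_range_rpow_le (sval_antitone A) (sval_nonneg A)
    (Nat.le_floor hms) (Nat.floor_le_of_le hsn) hmn hms hsn (Nat.floor_le hs0)

end SingularValueFunction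

/-- Interpolation inequality for the singular value function: for integers
`0 ≤ m < n ≤ d` and `s ∈ [m,n]`,
`φ^s(B) ≥ (φ^m(B))^{(n−s)/(n−m)} (φ^n(B))^{(s−m)/(n−m)}`; in particular (taking `m = 0`)
`φ^s(B) ≥ (φ^n(B))^{s/n}` for all `s ∈ [0,n]`. -/
theorem phi_interpolation {d : ℕ} (B : Matrix (Fin d) (Fin d) ℝ)
    (m n : ℕ) (hmn : m < n) (hnd : n ≤ d) :
    (∀ s : ℝ, (m : ℝ) ≤ s → s ≤ (n : ℝ) →
      (phi (m : ℝ) B) ^ (((n : ℝ) - s) / ((n : ℝ) - (m : ℝ))) *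
        (phi (n : ℝ) B) ^ ((s - (m : ℝ)) / ((n : ℝ) - (m : ℝ))) ≤ phi s B) ∧
    (∀ s : ℝ, 0 ≤ s → s ≤ (n : ℝ) → (phi (n : ℝ) B) ^ (s / (n : ℝ)) ≤ phi s B) := by
  refine ⟨fun s => phi_interpolation_of_le B hmn hnd, fun s hs0 hsn => ?_⟩
  have h := phi_interpolation_of_le B (m.zero_le.trans_lt hmn) hnd (s := s)
    (by exact_mod_cast hs0) hsn
  rwa [phi_natCast B (Nat.zero_le d), prod_range_zero, Real.one_rpow, one_mul, Nat.cast_zero,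
    sub_zero, sub_zero] at h
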